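/- arXiv:1502.00338 — 6 statements merged into one kernel-verified Lean document; each statement's English description precedes it below -/
import Mathlib

section
/- Let a1, a2, a3, b1, b2 be real constants and let ρ0, Veff, Ne, fpe be positive reals. There exist k1, k2 ∈ ℝ with 1 − k1·b2 ≠ 0 such that a1 + k1·a2·b1/(1 − k1·b2) < 0 and |a3·b1·(k2 − fpe·ρ0·Veff·k1)/(ρ0·Veff·Ne·(1 − k1·b2))| < |a1 + k1·a2·b1/(1 − k1·b2)| if and only if either a1 < 0, or (a1 ≥ 0 and a2·b1 ≠ 0). -/
/-!
Since `k2` only enters the second condition through `k2 - fpe·ρ0·Veff·k1`, choosing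
`k2 = fpe·ρ0·Veff·k1` makes its left side vanish, so the second condition reduces to the first
one being strict. The first condition asks that `a1 + k1·c/(1 - k1·b2)` (with `c = a2·b1`) be
negative for some admissible `k1`. If `c = 0` this is just `a1 < 0`; if `c ≠ 0` the Möbius map
`k ↦ k·c/(1 - k·b2)` attains every `t` with `c + t·b2 ≠ 0`, in particular some `t < -a1`.
-/

lemma exists_mul_div_one_sub_mul_eq {K : Type*} [Field K] {c b t : K} (hc : c ≠ 0)
    (ht : c + t * b ≠ 0) :
    ∃ k, 1 - k * b ≠ 0 ∧ k * c / (1 - k * b) = t := by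
  have hden : 1 - t / (c + t * b) * b = c / (c + t * b) := by
    field_simp
    ring
  refine ⟨t / (c + t * b), ?_, ?_⟩
  · rw [hden]
    exact div_ne_zero hc ht
  · rw [hden]
    field_simp

section MoebiusGain

variable {K : Type*} [Field K] [LinearOrder K] [IsStrictOrderedRing K]

lemma exists_lt_add_mul_ne_zero {c : K} (hc : c ≠ 0) (a b : K) :
    ∃ t < a, c + t * b ≠ 0 := by
  by_cases h : c + (a - 1) * b = 0
  · refine ⟨a - 2, by linarith, fun h' => hc ?_⟩
    have hb : b = 0 := by linear_combination h - h'
    simpa [hb] using h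
  · exact ⟨a - 1, by linarith, h⟩

lemma exists_add_mul_div_one_sub_mul_neg (a : K) {c : K} (hc : c ≠ 0) (b : K) :
    ∃ k, 1 - k * b ≠ 0 ∧ a + k * c / (1 - k * b) < 0 := by
  obtain ⟨t, hta, ht⟩ := exists_lt_add_mul_ne_zero hc (-a) b
  obtain ⟨k, hk, hkt⟩ := exists_mul_div_one_sub_mul_eq hc ht
  exact ⟨k, hk, by linarith⟩

end MoebiusGain

theorem exists_stabilizing_gains_iff_general
    (a1 a2 a3 b1 b2 ρ0 Veff Ne fpe : ℝ) :
    (∃ k1 k2 : ℝ, 1 - k1 * b2 ≠ 0 ∧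
        a1 + k1 * a2 * b1 / (1 - k1 * b2) < 0 ∧
        |a3 * b1 * (k2 - fpe * ρ0 * Veff * k1) / (ρ0 * Veff * Ne * (1 - k1 * b2))| <
          |a1 + k1 * a2 * b1 / (1 - k1 * b2)|) ↔
      (a1 < 0 ∨ (0 ≤ a1 ∧ a2 * b1 ≠ 0)) := by
  constructor
  · rintro ⟨k1, k2, -, hneg, -⟩
    rcases lt_or_ge a1 0 with ha | ha
    · exact Or.inl ha
    · refine Or.inr ⟨ha, fun hab => ?_⟩
      rw [mul_assoc, hab, mul_zero, zero_div, add_zero] at hneg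
      linarith
  · rintro (ha | ⟨-, hab⟩)
    · refine ⟨0, 0, by simp, by simpa using ha, ?_⟩
      simpa using ha.ne
    · obtain ⟨k1, hk1, hneg⟩ := exists_add_mul_div_one_sub_mul_neg a1 hab b2
      rw [← mul_assoc] at hneg
      refine ⟨k1, fpe * ρ0 * Veff * k1, hk1, hneg, ?_⟩
      simpa using hneg.ne

/-- existence of stabilizing gains `k1, k2` satisfying the two
stabilizability conditions is equivalent to `a1 < 0` or (`a1 ≥ 0` and `a2·b1 ≠ 0`). -/
theorem exists_stabilizing_gains_iff
    (a1 a2 a3 b1 b2 ρ0 Veff Ne fpe : ℝ)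
    (hρ0 : 0 < ρ0) (hVeff : 0 < Veff) (hNe : 0 < Ne) (hfpe : 0 < fpe) :
    (∃ k1 k2 : ℝ, 1 - k1 * b2 ≠ 0 ∧
        a1 + k1 * a2 * b1 / (1 - k1 * b2) < 0 ∧
        |a3 * b1 * (k2 - fpe * ρ0 * Veff * k1) / (ρ0 * Veff * Ne * (1 - k1 * b2))| <
          |a1 + k1 * a2 * b1 / (1 - k1 * b2)|) ↔
      (a1 < 0 ∨ (0 ≤ a1 ∧ a2 * b1 ≠ 0)) :=
  exists_stabilizing_gains_iff_general a1 a2 a3 b1 b2 ρ0 Veff Ne fpe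
end

section
/- Let θ0 < 0, α > 0 and θ1, a3 ∈ ℝ satisfy |a3·θ1| < −θ0. Then there exist constants A1 > 0 and γ1 > 0 such that the symmetric 2×2 real matrix with rows (2·θ0 + A1·α·θ1², a3) and (a3, −A1·e^{−γ1}·α) is negative definite; equivalently, 2·θ0 + A1·α·θ1² < 0 and (2·θ0 + A1·α·θ1²)·(−A1·e^{−γ1}·α) − a3² > 0. -/
/-! With `u := A1 * α`, the (1,1) entry is `2θ0 + u θ1²` and the determinant is
`-(2θ0 + u θ1²) u e^{-γ1} - a3²`. Choosing `u θ1² ≤ -θ0` makes the entry at most `θ0 < 0`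
and the determinant at least `-θ0 u e^{-γ1} - a3²`; the hypothesis `|a3 θ1| < -θ0` is exactly
what leaves room for `u` with, in addition, `a3² < -θ0 u`, and then `γ1` is taken small enough
that `e^{-γ1}` is still close to `1`. -/

open Matrix Filter Topology

theorem Matrix.dotProduct_mulVec_fin_two_neg {a b d : ℝ} (ha : a < 0) (hdet : 0 < a * d - b ^ 2)
    {x : Fin 2 → ℝ} (hx : x ≠ 0) : x ⬝ᵥ (!![a, b; b, d] *ᵥ x) < 0 := by
  have completed_square :
      a * (x ⬝ᵥ (!![a, b; b, d] *ᵥ x)) = (a * x 0 + b * x 1) ^ 2 + (a * d - b ^ 2) * x 1 ^ 2 := by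
    simp only [dotProduct, mulVec, Fin.sum_univ_two, cons_val', cons_val_zero, cons_val_one,
      empty_val', cons_val_fin_one, of_apply]
    ring
  have hpos : 0 < (a * x 0 + b * x 1) ^ 2 + (a * d - b ^ 2) * x 1 ^ 2 := by
    rcases eq_or_ne (x 1) 0 with h1 | h1
    · have h0 : x 0 ≠ 0 := fun h0 => hx (funext fun i => by fin_cases i <;> assumption)
      simp only [h1, mul_zero, add_zero, ne_eq, OfNat.ofNat_ne_zero, not_false_eq_true,
        zero_pow]
      exact sq_pos_of_ne_zero (mul_ne_zero ha.ne h0)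
    · positivity
  exact neg_of_mul_pos_right (completed_square ▸ hpos) ha.le

theorem Real.exists_pos_lt_mul_exp_neg {a c : ℝ} (h : a < c) : ∃ γ > 0, a < c * exp (-γ) := by
  have hlim : Tendsto (fun γ => c * exp (-γ)) (𝓝[>] 0) (𝓝 c) := by
    have hcont : Continuous fun γ => c * exp (-γ) := by fun_prop
    simpa using (hcont.tendsto 0).mono_left nhdsWithin_le_nhds
  obtain ⟨γ, hγ, hγpos⟩ := ((hlim.eventually_const_lt h).and self_mem_nhdsWithin).exists
  exact ⟨γ, hγpos, hγ⟩

theorem exists_pos_mul_sq_le_and_sq_lt_mul {a s b : ℝ} (h : |a * s| < b) :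
    ∃ u > 0, u * s ^ 2 ≤ b ∧ a ^ 2 < u * b := by
  have hb : 0 < b := (abs_nonneg _).trans_lt h
  have hsq : a ^ 2 * s ^ 2 < b ^ 2 := by
    rw [← mul_pow, ← sq_abs]
    exact pow_lt_pow_left₀ h (abs_nonneg _) two_ne_zero
  rcases eq_or_ne s 0 with rfl | hs
  · refine ⟨(a ^ 2 + 1) / b, by positivity, by simpa using hb.le, ?_⟩
    rw [div_mul_cancel₀ _ hb.ne']
    linarith
  · have hs2 : 0 < s ^ 2 := by positivity
    refine ⟨b / s ^ 2, by positivity, (div_mul_cancel₀ _ hs2.ne').le, ?_⟩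
    rw [div_mul_eq_mul_div, lt_div_iff₀ hs2, ← sq]
    exact hsq

/-- if `θ0 < 0`, `α > 0` and `|a3·θ1| < −θ0`, then there exist `A1 > 0` and
`γ1 > 0` such that the symmetric matrix `!![2θ0 + A1·α·θ1², a3; a3, −A1·e^{−γ1}·α]` is
negative definite; equivalently its (1,1) entry is negative and its determinant is positive. -/
theorem exists_weights_matrix_negative_definite
    (θ0 θ1 a3 α : ℝ) (hθ0 : θ0 < 0) (hα : 0 < α) (h : |a3 * θ1| < -θ0) :
    ∃ A1 > (0:ℝ), ∃ γ1 > (0:ℝ),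
      (∀ x : Fin 2 → ℝ, x ≠ 0 →
        dotProduct x
          ((!![2 * θ0 + A1 * α * θ1 ^ 2, a3; a3, -A1 * Real.exp (-γ1) * α]).mulVec x) < 0) ∧
      2 * θ0 + A1 * α * θ1 ^ 2 < 0 ∧
      (2 * θ0 + A1 * α * θ1 ^ 2) * (-A1 * Real.exp (-γ1) * α) - a3 ^ 2 > 0 := by
  obtain ⟨u, hu, hu_le, hu_lt⟩ := exists_pos_mul_sq_le_and_sq_lt_mul h
  obtain ⟨γ1, hγ1, hγ1_lt⟩ := Real.exists_pos_lt_mul_exp_neg hu_lt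
  have hA1 : u / α * α = u := div_mul_cancel₀ u hα.ne'
  have hentry : 2 * θ0 + u / α * α * θ1 ^ 2 < 0 := by
    rw [hA1]
    linarith
  have hdet : (2 * θ0 + u / α * α * θ1 ^ 2) * (-(u / α) * Real.exp (-γ1) * α) - a3 ^ 2 > 0 := by
    have hexp := Real.exp_pos (-γ1)
    have hrw : -(u / α) * Real.exp (-γ1) * α = -(u * Real.exp (-γ1)) := by
      field_simp
    rw [hA1, hrw]
    nlinarith [mul_pos hu hexp]
  exact ⟨u / α, div_pos hu hα, γ1, hγ1,
    fun x hx => Matrix.dotProduct_mulVec_fin_two_neg hentry hdet hx, hentry, hdet⟩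
end

section
/- Suppose the gains k1, k2 ∈ ℝ satisfy 1 − k1·b2 ≠ 0, where b2 = q(le). Then there exist positive constants γ2, β2, δ2, θ2 and δ such that for every classical solution (l, f) of the normalized closed-loop extrusion model on [0,∞) with f of class C² on [0,∞)×[0,1], and every time t ≥ 0 at which |l(t) − le| + |N(t) − Ne| + |f(t,1) − fpe| ≤ δ, the quantity V2(t) := ∫₀¹ e^{−γ2·x}·(∂ₓf(t,x))² dx is differentiable and satisfies V2'(t) ≤ −β2·V2(t) − δ2·(∂ₓf(t,1))² + θ2·((l(t) − le)² + (f(t,1) − fpe)²). -/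
/-- Pressure coefficient `q(l) = η·ρ0·Veff·(L − l)/(B·ρ0 + Kd·(L − l))` of the isothermal
extrusion model. -/
noncomputable def qfun (η ρ0 Veff L B Kd : ℝ) (l : ℝ) : ℝ :=
  η * ρ0 * Veff * (L - l) / (B * ρ0 + Kd * (L - l))

/-!
Take `γ2 = 1` and write `a = ζ·N(t)`, `b = l'(t)`, `c = l(t)`, so that the transport speed is
`α(x) = (a − x·b)/c`. Differentiating `V2` under the integral sign, replacing `∂ₜ∂ₓf` by the
`x`-derivative of the transport equation and integrating by parts gives
`V2' = ∫₀¹ e^{−x} (b(1+x) − a)/c · (∂ₓf)² − e^{−1}(a − b)/c · (∂ₓf(t,1))² + (a/c)(∂ₓf(t,0))²`.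
Near the equilibrium `a` stays above `ζ·Ne/2` and `b` is small, so the bulk and outflow
coefficients have the right sign uniformly. The inflow term equals `(c/a)(∂ₜf(t,0))²` by the
transport equation at `x = 0`. Since `1 − k1·q(le) ≠ 0`, the feedback law determines `N`, hence
the boundary value `f(t,0)`, as a smooth function of `l` near `le`; thus `∂ₜf(t,0) = O(l')`, and
`l' = O(|l − le| + |f(t,1) − fpe|)` because the interface velocity vanishes at the equilibrium.
-/

open Set Filter Topology MeasureTheory

theorem HasDerivAt.unique_of_eventuallyEq_nhdsGE {E : Type*} [NormedAddCommGroup E]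
    [NormedSpace ℝ E] {φ ψ : ℝ → E} {t : ℝ} {φ' ψ' : E}
    (hφ : HasDerivAt φ φ' t) (hψ : HasDerivAt ψ ψ' t) (h : φ =ᶠ[𝓝[≥] t] ψ) : φ' = ψ' :=
  (uniqueDiffWithinAt_Ici t).eq_deriv _
    (hφ.hasDerivWithinAt.congr_of_eventuallyEq h.symm (h.eq_of_nhdsWithin self_mem_Ici).symm)
    hψ.hasDerivWithinAt

theorem ContDiffAt.exists_pos_eventually_abs_deriv_le {H : ℝ → ℝ} {x₀ : ℝ}
    (hH : ContDiffAt ℝ 1 H x₀) :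
    ∃ M > 0, ∀ᶠ x in 𝓝 x₀, DifferentiableAt ℝ H x ∧ |deriv H x| ≤ M := by
  obtain ⟨K, s, hs, hlip⟩ := hH.exists_lipschitzOnWith
  refine ⟨K + 1, by positivity, ?_⟩
  filter_upwards [hH.eventually (by simp), Filter.Eventually.eventually_nhds hs] with x hx hsx
  exact ⟨hx.differentiableAt one_ne_zero, (norm_deriv_le_of_lipschitzOn hsx hlip).trans (by simp)⟩

theorem dist_sq_le_sq_add_sq (p r : ℝ × ℝ) :
    dist p r ^ 2 ≤ (p.1 - r.1) ^ 2 + (p.2 - r.2) ^ 2 := by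
  rw [Prod.dist_eq, Real.dist_eq, Real.dist_eq]
  rcases max_cases |p.1 - r.1| |p.2 - r.2| with ⟨h, _⟩ | ⟨h, _⟩ <;>
    rw [h, sq_abs] <;> nlinarith

theorem sq_mul_le_of_abs_le {u b M K : ℝ} {p r : ℝ × ℝ} (hu : |u| ≤ M)
    (hb : |b| ≤ K * dist p r) :
    (u * b) ^ 2 ≤ (M * K) ^ 2 * ((p.1 - r.1) ^ 2 + (p.2 - r.2) ^ 2) := calc
  (u * b) ^ 2 = |u| ^ 2 * |b| ^ 2 := by rw [mul_pow, sq_abs, sq_abs]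
  _ ≤ M ^ 2 * (K * dist p r) ^ 2 := by gcongr
  _ = (M * K) ^ 2 * dist p r ^ 2 := by ring
  _ ≤ (M * K) ^ 2 * ((p.1 - r.1) ^ 2 + (p.2 - r.2) ^ 2) := by
    gcongr; exact dist_sq_le_sq_add_sq p r

section PartialDerivatives

variable {E : Type*} [NormedAddCommGroup E] [NormedSpace ℝ E] {F : ℝ × ℝ → E}

noncomputable def partialFst (F : ℝ × ℝ → E) (p : ℝ × ℝ) : E := fderiv ℝ F p (1, 0)

noncomputable def partialSnd (F : ℝ × ℝ → E) (p : ℝ × ℝ) : E := fderiv ℝ F p (0, 1)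

theorem hasDerivAt_partialFst {t x : ℝ} (hF : DifferentiableAt ℝ F (t, x)) :
    HasDerivAt (fun s => F (s, x)) (partialFst F (t, x)) t :=
  hF.hasFDerivAt.comp_hasDerivAt t ((hasDerivAt_id t).prodMk (hasDerivAt_const t x))

theorem hasDerivAt_partialSnd {t x : ℝ} (hF : DifferentiableAt ℝ F (t, x)) :
    HasDerivAt (fun y => F (t, y)) (partialSnd F (t, x)) x :=
  hF.hasFDerivAt.comp_hasDerivAt x ((hasDerivAt_const x t).prodMk (hasDerivAt_id x))

theorem ContDiff.partialFst {m n : WithTop ℕ∞} (hF : ContDiff ℝ n F) (hmn : m + 1 ≤ n) :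
    ContDiff ℝ m (partialFst F) :=
  (hF.fderiv_right hmn).clm_apply contDiff_const

theorem ContDiff.partialSnd {m n : WithTop ℕ∞} (hF : ContDiff ℝ n F) (hmn : m + 1 ≤ n) :
    ContDiff ℝ m (partialSnd F) :=
  (hF.fderiv_right hmn).clm_apply contDiff_const

theorem partialFst_partialSnd (hF : ContDiff ℝ 2 F) :
    partialFst (partialSnd F) = partialSnd (partialFst F) := by
  ext p
  have hdiff : DifferentiableAt ℝ (fderiv ℝ F) p :=
    ((hF.fderiv_right (m := 1) (by norm_num)).differentiable one_ne_zero).differentiableAt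
  have hcomp (v : ℝ × ℝ) : fderiv ℝ (fun q => fderiv ℝ F q v) p
      = (ContinuousLinearMap.apply ℝ E v).comp (fderiv ℝ (fderiv ℝ F) p) :=
    ((ContinuousLinearMap.apply ℝ E v).hasFDerivAt.comp p hdiff.hasFDerivAt).fderiv
  change fderiv ℝ (fun q => fderiv ℝ F q (0, 1)) p (1, 0)
    = fderiv ℝ (fun q => fderiv ℝ F q (1, 0)) p (0, 1)
  rw [hcomp, hcomp]
  exact ((hF.contDiffAt.isSymmSndFDerivAt (by simp)).eq _ _).symm

end PartialDerivatives

theorem hasDerivAt_intervalIntegral_of_continuous {E : Type*} [NormedAddCommGroup E]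
    [NormedSpace ℝ E] [CompleteSpace E] {F F' : ℝ × ℝ → E} (hF : Continuous F)
    (hF' : Continuous F') (hd : ∀ s x, HasDerivAt (fun s => F (s, x)) (F' (s, x)) s)
    (a b t : ℝ) :
    HasDerivAt (fun s => ∫ x in a..b, F (s, x)) (∫ x in a..b, F' (t, x)) t := by
  obtain ⟨C, hC⟩ := (isCompact_Icc.prod isCompact_uIcc :
    IsCompact (Icc (t - 1) (t + 1) ×ˢ uIcc a b)).exists_bound_of_continuousOn hF'.continuousOn
  refine (intervalIntegral.hasDerivAt_integral_of_dominated_loc_of_deriv_le (bound := fun _ => C)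
    (Metric.ball_mem_nhds t one_pos)
    (Eventually.of_forall fun s => (hF.comp (Continuous.prodMk_right s)).aestronglyMeasurable)
    ((hF.comp (Continuous.prodMk_right t)).intervalIntegrable a b)
    (hF'.comp (Continuous.prodMk_right t)).aestronglyMeasurable ?_ intervalIntegrable_const
    (Eventually.of_forall fun x _ s _ => hd s x)).2
  refine Eventually.of_forall fun x hx s hs => hC (s, x) ⟨?_, uIoc_subset_uIcc hx⟩
  rw [Metric.mem_ball, Real.dist_eq, abs_lt] at hs
  constructor <;> linarith

theorem integral_weight_mul_transport_eq {w w' α α' g g' : ℝ → ℝ} {a b : ℝ}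
    (hw : ∀ x, HasDerivAt w (w' x) x) (hα : ∀ x, HasDerivAt α (α' x) x)
    (hg : ∀ x, HasDerivAt g (g' x) x) (hw' : Continuous w') (hα' : Continuous α')
    (hg' : Continuous g') :
    ∫ x in a..b, w x * (2 * g x * -(α' x * g x + α x * g' x)) =
      (∫ x in a..b, (w' x * α x - w x * α' x) * g x ^ 2)
        - w b * α b * g b ^ 2 + w a * α a * g a ^ 2 := by
  have hwc : Continuous w := continuous_iff_continuousAt.2 fun x => (hw x).continuousAt
  have hαc : Continuous α := continuous_iff_continuousAt.2 fun x => (hα x).continuousAt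
  have hgc : Continuous g := continuous_iff_continuousAt.2 fun x => (hg x).continuousAt
  set D : ℝ → ℝ := fun x => (w' x * α x + w x * α' x) * g x ^ 2 + w x * α x * (2 * g x * g' x)
  have hD : ∀ x ∈ uIcc a b, HasDerivAt (fun x => w x * α x * g x ^ 2) (D x) x := fun x _ =>
    (((hw x).mul (hα x)).mul ((hg x).pow 2)).congr_deriv
      (by simp only [D, Pi.mul_apply, Pi.pow_apply]; ring)
  have hDint : IntervalIntegrable D volume a b := by
    apply Continuous.intervalIntegrable; fun_prop
  rw [intervalIntegral.integral_congr (g := fun x => (w' x * α x - w x * α' x) * g x ^ 2 - D x)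
      (fun x _ => by simp only [D]; ring),
    intervalIntegral.integral_sub (by apply Continuous.intervalIntegrable; fun_prop) hDint,
    intervalIntegral.integral_eq_sub_of_hasDerivAt hD hDint]
  ring

theorem partialSnd_partialFst_of_transport {F : ℝ × ℝ → ℝ} (hF : ContDiff ℝ 2 F)
    {α α' : ℝ → ℝ} {t a b : ℝ} (hab : a < b) (hα : ∀ x, HasDerivAt α (α' x) x)
    (htr : ∀ x ∈ Icc a b, partialFst F (t, x) = -(α x * partialSnd F (t, x))) :
    ∀ x ∈ Icc a b, partialSnd (partialFst F) (t, x) =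
      -(α' x * partialSnd F (t, x) + α x * partialSnd (partialSnd F) (t, x)) := by
  intro x hx
  have hlhs : HasDerivAt (fun y => partialFst F (t, y)) (partialSnd (partialFst F) (t, x)) x :=
    hasDerivAt_partialSnd (((hF.partialFst (by norm_num)).differentiable one_ne_zero) _)
  have hrhs : HasDerivAt (fun y => -(α y * partialSnd F (t, y)))
      (-(α' x * partialSnd F (t, x) + α x * partialSnd (partialSnd F) (t, x))) x :=
    ((hα x).mul (hasDerivAt_partialSnd
      (((hF.partialSnd (by norm_num)).differentiable one_ne_zero) _))).neg
  exact (uniqueDiffOn_Icc hab x hx).eq_deriv _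
    (hlhs.hasDerivWithinAt.congr (fun y hy => (htr y hy).symm) (htr x hx).symm)
    hrhs.hasDerivWithinAt

theorem hasDerivAt_integral_weight_mul_sq_of_transport {F : ℝ × ℝ → ℝ} (hF : ContDiff ℝ 2 F)
    {w w' α α' : ℝ → ℝ} {t a b : ℝ} (hab : a < b) (hw : ∀ x, HasDerivAt w (w' x) x)
    (hα : ∀ x, HasDerivAt α (α' x) x) (hw' : Continuous w') (hα' : Continuous α')
    (htr : ∀ x ∈ Icc a b, partialFst F (t, x) = -(α x * partialSnd F (t, x))) :
    HasDerivAt (fun s => ∫ x in a..b, w x * partialSnd F (s, x) ^ 2)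
      ((∫ x in a..b, (w' x * α x - w x * α' x) * partialSnd F (t, x) ^ 2)
        - w b * α b * partialSnd F (t, b) ^ 2 + w a * α a * partialSnd F (t, a) ^ 2) t := by
  set g := partialSnd F
  have hg : ContDiff ℝ 1 g := hF.partialSnd (by norm_num)
  have hgd : Differentiable ℝ g := hg.differentiable one_ne_zero
  have hwc : Continuous w := continuous_iff_continuousAt.2 fun x => (hw x).continuousAt
  have henergy := hasDerivAt_intervalIntegral_of_continuous
    (F := fun p => w p.2 * g p ^ 2) (F' := fun p => w p.2 * (2 * g p * partialFst g p))
    (by fun_prop) (by have := (hg.partialFst (m := 0) le_rfl).continuous; fun_prop)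
    (fun s x => ((hasDerivAt_partialFst (hgd (s, x))).pow 2).const_mul (w x) |>.congr_deriv
      (by ring)) a b t
  dsimp only at henergy
  rw [intervalIntegral.integral_congr (fun x hx => by
      rw [partialFst_partialSnd hF, partialSnd_partialFst_of_transport hF hab hα htr x
        (by rwa [uIcc_of_le hab.le] at hx)]),
    integral_weight_mul_transport_eq hw hα (fun x => hasDerivAt_partialSnd (hgd (t, x))) hw' hα'
      ((hg.partialSnd (m := 0) le_rfl).continuous.comp (Continuous.prodMk_right t))] at henergy
  exact henergy

theorem transport_energy_estimate {f : ℝ → ℝ → ℝ} (hf : ContDiff ℝ 2 (Function.uncurry f))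
    {t a b c C P : ℝ} (hP : 0 < P) (hc : 0 < c) (hcC : c ≤ C) (ha : P ≤ a) (hb : |b| ≤ P / 4)
    (htr : ∀ x ∈ Icc (0:ℝ) 1, deriv (fun s => f s x) t + ((a - x * b) / c) * deriv (f t) x = 0) :
    ∃ v, HasDerivAt (fun s => ∫ x in (0:ℝ)..1, Real.exp (-1 * x) * deriv (f s) x ^ 2) v t ∧
      v ≤ -(P / (2 * C)) * (∫ x in (0:ℝ)..1, Real.exp (-1 * x) * deriv (f t) x ^ 2)
        - P / (2 * C) * Real.exp (-1) * deriv (f t) 1 ^ 2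
        + C / P * deriv (fun s => f s 0) t ^ 2 := by
  set F := Function.uncurry f
  have hFd : Differentiable ℝ F := hf.differentiable two_ne_zero
  have hsnd (s x : ℝ) : deriv (f s) x = partialSnd F (s, x) :=
    (hasDerivAt_partialSnd (hFd (s, x))).deriv
  have hfst (x : ℝ) : deriv (fun s => f s x) t = partialFst F (t, x) :=
    (hasDerivAt_partialFst (hFd (t, x))).deriv
  have habc := abs_le.1 hb
  have hC : 0 < C := hc.trans_le hcC
  have htr' : ∀ x ∈ Icc (0:ℝ) 1,
      partialFst F (t, x) = -((a - x * b) / c * partialSnd F (t, x)) := fun x hx => by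
    linear_combination (by simpa only [hsnd, hfst] using htr x hx :
      partialFst F (t, x) + (a - x * b) / c * partialSnd F (t, x) = 0)
  have henergy := hasDerivAt_integral_weight_mul_sq_of_transport hf zero_lt_one
    (w := fun x => Real.exp (-1 * x)) (w' := fun x => -Real.exp (-1 * x))
    (α := fun x => (a - x * b) / c) (α' := fun _ => -b / c)
    (fun x => ((hasDerivAt_id' x).const_mul (-1 : ℝ)).exp |>.congr_deriv (by ring))
    (fun x => (((hasDerivAt_id' x).mul_const b).const_sub a).div_const c |>.congr_deriv
      (by ring))
    (by fun_prop) continuous_const htr'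
  simp only [← hsnd] at henergy
  refine ⟨_, henergy, ?_⟩
  have hcoeff : ∀ x ∈ Icc (0:ℝ) 1, P / 2 / C ≤ (a - (1 + x) * b) / c := fun x hx => by
    refine div_le_div₀ (by nlinarith [hx.1, hx.2]) ?_ hc hcC
    nlinarith [hx.1, hx.2]
  have hG : Continuous (deriv (f t)) := by
    rw [funext (hsnd t)]
    exact (hf.partialSnd (m := 0) (by norm_num)).continuous.comp (Continuous.prodMk_right t)
  have hbulk : (∫ x in (0:ℝ)..1, (-Real.exp (-1 * x) * ((a - x * b) / c)
        - Real.exp (-1 * x) * (-b / c)) * deriv (f t) x ^ 2)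
      ≤ -(P / (2 * C)) * ∫ x in (0:ℝ)..1, Real.exp (-1 * x) * deriv (f t) x ^ 2 := by
    rw [← intervalIntegral.integral_const_mul]
    refine intervalIntegral.integral_mono_on zero_le_one
      ((by fun_prop : Continuous _).intervalIntegrable _ _)
      ((by fun_prop : Continuous _).intervalIntegrable _ _)
      fun x hx => ?_
    have := mul_le_mul_of_nonneg_left (hcoeff x hx)
      (by positivity : 0 ≤ Real.exp (-1 * x) * deriv (f t) x ^ 2)
    linear_combination this
  have hout : P / (2 * C) * Real.exp (-1) * deriv (f t) 1 ^ 2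
      ≤ Real.exp (-1 * 1) * ((a - 1 * b) / c) * deriv (f t) 1 ^ 2 := by
    have := mul_le_mul_of_nonneg_left (hcoeff 0 (by norm_num))
      (by positivity : 0 ≤ Real.exp (-1) * deriv (f t) 1 ^ 2)
    rw [mul_one]
    linear_combination this
  have hin : Real.exp (-1 * 0) * ((a - 0 * b) / c) * deriv (f t) 0 ^ 2
      ≤ C / P * deriv (fun s => f s 0) t ^ 2 := by
    have hy : deriv (fun s => f s 0) t = -(a / c) * deriv (f t) 0 := by
      linear_combination htr 0 (by norm_num)
    calc Real.exp (-1 * 0) * ((a - 0 * b) / c) * deriv (f t) 0 ^ 2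
        = c / a * deriv (fun s => f s 0) t ^ 2 := by
          rw [hy]; field_simp; simp
      _ ≤ C / P * deriv (fun s => f s 0) t ^ 2 :=
          mul_le_mul_of_nonneg_right (div_le_div₀ hC.le hcC hP ha) (sq_nonneg _)
  linarith

theorem contDiffAt_qfun {η ρ0 Veff L B Kd l : ℝ} {n : WithTop ℕ∞}
    (h : B * ρ0 + Kd * (L - l) ≠ 0) : ContDiffAt ℝ n (qfun η ρ0 Veff L B Kd) l :=
  ContDiffAt.div (by fun_prop) (by fun_prop) h

section ClosedLoop

variable {q : ℝ → ℝ} {le Ne fpe k1 k2 Kd η ρ0 Seff Veff : ℝ}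

/-- The feedback law `N = Ne + k1 (N q(l) − Ne q(le))` solved for `N`. -/
noncomputable def closedLoopSpeed (q : ℝ → ℝ) (le Ne k1 l : ℝ) : ℝ :=
  Ne * (1 - k1 * q le) / (1 - k1 * q l)

/-- The boundary value `f(t, 0) = Fin/(ρ0·Veff·N)` as a function of `l` alone. -/
noncomputable def closedLoopInlet (q : ℝ → ℝ) (le Ne fpe k1 k2 ρ0 Veff l : ℝ) : ℝ :=
  (ρ0 * Veff * Ne * fpe + k2 * (closedLoopSpeed q le Ne k1 l * q l - Ne * q le))
    / (ρ0 * Veff * closedLoopSpeed q le Ne k1 l)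

/-- The interface velocity `l'` as a function of `(l, f(t, 1))`. -/
noncomputable def closedLoopInterfaceSpeed (q : ℝ → ℝ) (le Ne k1 Kd η ρ0 Seff Veff : ℝ)
    (p : ℝ × ℝ) : ℝ :=
  ((Kd / η) * (closedLoopSpeed q le Ne k1 p.1 * q p.1)
      - ρ0 * Veff * closedLoopSpeed q le Ne k1 p.1 * p.2) / (ρ0 * Seff * (1 - p.2))

theorem eq_closedLoopSpeed {N l : ℝ} (hN : N = Ne + k1 * (N * q l - Ne * q le))
    (hl : 1 - k1 * q l ≠ 0) : N = closedLoopSpeed q le Ne k1 l := by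
  rw [closedLoopSpeed, eq_div_iff hl]
  linear_combination hN

theorem closedLoopSpeed_self (h : 1 - k1 * q le ≠ 0) : closedLoopSpeed q le Ne k1 le = Ne :=
  mul_div_cancel_right₀ _ h

theorem contDiffAt_closedLoopSpeed {n : WithTop ℕ∞} {l : ℝ} (hq : ContDiffAt ℝ n q l)
    (hl : 1 - k1 * q l ≠ 0) : ContDiffAt ℝ n (closedLoopSpeed q le Ne k1) l :=
  contDiffAt_const.div (contDiffAt_const.sub (contDiffAt_const.mul hq)) hl

theorem contDiffAt_closedLoopInlet {n : WithTop ℕ∞} (hq : ContDiffAt ℝ n q le)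
    (hden : 1 - k1 * q le ≠ 0) (hρ0 : ρ0 ≠ 0) (hVeff : Veff ≠ 0) (hNe : Ne ≠ 0) :
    ContDiffAt ℝ n (closedLoopInlet q le Ne fpe k1 k2 ρ0 Veff) le := by
  have hN := contDiffAt_closedLoopSpeed (le := le) (Ne := Ne) hq hden
  refine contDiffAt_const.add (contDiffAt_const.mul ((hN.mul hq).sub contDiffAt_const)) |>.div
    (contDiffAt_const.mul hN) ?_
  rw [closedLoopSpeed_self hden]
  exact mul_ne_zero (mul_ne_zero hρ0 hVeff) hNe

theorem contDiffAt_closedLoopInterfaceSpeed {n : WithTop ℕ∞} (hq : ContDiffAt ℝ n q le)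
    (hden : 1 - k1 * q le ≠ 0) (hρ0 : ρ0 ≠ 0) (hSeff : Seff ≠ 0) (hfpe : fpe ≠ 1) :
    ContDiffAt ℝ n (closedLoopInterfaceSpeed q le Ne k1 Kd η ρ0 Seff Veff) (le, fpe) := by
  have hN := (contDiffAt_closedLoopSpeed (le := le) (Ne := Ne) hq hden).comp (le, fpe)
    contDiffAt_fst
  have hq' := hq.comp (le, fpe) contDiffAt_fst
  refine (contDiffAt_const.mul (hN.mul hq')).sub ((contDiffAt_const.mul hN).mul contDiffAt_snd)
    |>.div (contDiffAt_const.mul (contDiffAt_const.sub contDiffAt_snd)) ?_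
  exact mul_ne_zero (mul_ne_zero hρ0 hSeff) (sub_ne_zero.2 hfpe.symm)

theorem closedLoopInterfaceSpeed_equilibrium (hden : 1 - k1 * q le ≠ 0)
    (heq : (Kd / η) * Ne * q le = ρ0 * Veff * Ne * fpe) :
    closedLoopInterfaceSpeed q le Ne k1 Kd η ρ0 Seff Veff (le, fpe) = 0 := by
  rw [closedLoopInterfaceSpeed, closedLoopSpeed_self hden, div_eq_zero_iff]
  left
  linear_combination heq

theorem exists_closedLoop_local_bounds (hq : ContDiffAt ℝ 1 q le) (hden : 1 - k1 * q le ≠ 0)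
    (hρ0 : ρ0 ≠ 0) (hSeff : Seff ≠ 0) (hVeff : Veff ≠ 0) (hNe : Ne ≠ 0) (hfpe : fpe ≠ 1)
    (heq : (Kd / η) * Ne * q le = ρ0 * Veff * Ne * fpe) :
    ∃ ε > 0, ∃ M > 0, ∃ K > 0,
      (∀ l, |l - le| < ε → 1 - k1 * q l ≠ 0 ∧
        DifferentiableAt ℝ (closedLoopInlet q le Ne fpe k1 k2 ρ0 Veff) l ∧
        |deriv (closedLoopInlet q le Ne fpe k1 k2 ρ0 Veff) l| ≤ M) ∧
      ∀ p, dist p (le, fpe) < ε →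
        |closedLoopInterfaceSpeed q le Ne k1 Kd η ρ0 Seff Veff p| ≤ K * dist p (le, fpe) := by
  obtain ⟨M, hM, hH⟩ := (contDiffAt_closedLoopInlet (fpe := fpe) (k2 := k2)
    hq hden hρ0 hVeff hNe).exists_pos_eventually_abs_deriv_le
  obtain ⟨K, hK, hG⟩ := ((contDiffAt_closedLoopInterfaceSpeed (Ne := Ne) (Kd := Kd) (η := η)
    (Veff := Veff) hq hden hρ0 hSeff hfpe).differentiableAt one_ne_zero).isBigO_sub.exists_pos
  have hden' : ∀ᶠ l in 𝓝 le, 1 - k1 * q l ≠ 0 :=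
    (continuousAt_const.sub (continuousAt_const.mul hq.continuousAt)).eventually_ne hden
  obtain ⟨ε₁, hε₁, h₁⟩ := Metric.eventually_nhds_iff.1 (hden'.and hH)
  obtain ⟨ε₂, hε₂, h₂⟩ := Metric.eventually_nhds_iff.1 hG.bound
  refine ⟨min ε₁ ε₂, lt_min hε₁ hε₂, M, hM, K, hK, fun l hl => ?_, fun p hp => ?_⟩
  · exact h₁ (by rw [Real.dist_eq]; exact hl.trans_le (min_le_left _ _))
  · simpa [closedLoopInterfaceSpeed_equilibrium hden heq, dist_eq_norm] using
      h₂ (hp.trans_le (min_le_right _ _))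

theorem closedLoop_deriv_eq {l : ℝ → ℝ} {f : ℝ → ℝ → ℝ} {N Fi ΔP : ℝ → ℝ} {ε t : ℝ}
    (hl : Continuous l) (hf : Differentiable ℝ (Function.uncurry f))
    (hΔP : ∀ t, 0 ≤ t → ΔP t = N t * q (l t))
    (hN : ∀ t, 0 ≤ t → N t = Ne + k1 * (ΔP t - Ne * q le))
    (hFi : ∀ t, 0 ≤ t → Fi t = ρ0 * Veff * Ne * fpe + k2 * (ΔP t - Ne * q le))
    (hl' : ∀ t, 0 ≤ t → HasDerivAt l
      (((Kd / η) * ΔP t - ρ0 * Veff * N t * f t 1) / (ρ0 * Seff * (1 - f t 1))) t)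
    (hbc : ∀ t, 0 ≤ t → f t 0 = Fi t / (ρ0 * Veff * N t))
    (hloc : ∀ x, |x - le| < ε → 1 - k1 * q x ≠ 0 ∧
      DifferentiableAt ℝ (closedLoopInlet q le Ne fpe k1 k2 ρ0 Veff) x)
    (ht : 0 ≤ t) (hlt : |l t - le| < ε) :
    deriv l t = closedLoopInterfaceSpeed q le Ne k1 Kd η ρ0 Seff Veff (l t, f t 1) ∧
      deriv (fun s => f s 0) t =
        deriv (closedLoopInlet q le Ne fpe k1 k2 ρ0 Veff) (l t) * deriv l t := by
  have hspeed : ∀ s, 0 ≤ s → |l s - le| < ε → N s = closedLoopSpeed q le Ne k1 (l s) :=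
    fun s hs hls => eq_closedLoopSpeed (by rw [← hΔP s hs]; exact hN s hs) (hloc _ hls).1
  have hinlet : ∀ s, 0 ≤ s → |l s - le| < ε →
      f s 0 = closedLoopInlet q le Ne fpe k1 k2 ρ0 Veff (l s) := fun s hs hls => by
    rw [hbc s hs, hFi s hs, hΔP s hs, hspeed s hs hls, closedLoopInlet]
  have hvel : deriv l t = closedLoopInterfaceSpeed q le Ne k1 Kd η ρ0 Seff Veff (l t, f t 1) := by
    rw [(hl' t ht).deriv, hΔP t ht, hspeed t ht hlt, closedLoopInterfaceSpeed]
  have hφ : HasDerivAt (fun s => f s 0) (deriv (fun s => f s 0) t) t :=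
    (hasDerivAt_partialFst (hf (t, 0))).differentiableAt.hasDerivAt
  refine ⟨hvel, hφ.unique_of_eventuallyEq_nhdsGE
    (((hloc _ hlt).2.hasDerivAt).comp t (hl' t ht).differentiableAt.hasDerivAt) ?_⟩
  have hnear : ∀ᶠ s in 𝓝 t, |l s - le| < ε :=
    (hl.continuousAt.sub continuousAt_const).abs.eventually_lt continuousAt_const hlt
  filter_upwards [nhdsWithin_le_nhds hnear, self_mem_nhdsWithin] with s hs hst
  exact hinlet s (ht.trans hst) hs

end ClosedLoop

theorem lyapunov_V2_decay_general
    (L B Kd ζ η ρ0 Seff Veff : ℝ)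
    (hB : 0 < B) (hKd : 0 < Kd) (hζ : 0 < ζ)
    (hρ0 : 0 < ρ0) (hSeff : 0 < Seff) (hVeff : 0 < Veff)
    (le fpe Ne : ℝ)
    (hle : le ∈ Set.Ioo 0 L) (hfpe : fpe ∈ Set.Ioo (0:ℝ) 1) (hNe : 0 < Ne)
    (heq : (Kd / η) * Ne * qfun η ρ0 Veff L B Kd le = ρ0 * Veff * Ne * fpe)
    (k1 k2 : ℝ)
    (hden : 1 - k1 * qfun η ρ0 Veff L B Kd le ≠ 0) :
    ∃ γ2 > (0:ℝ), ∃ β2 > (0:ℝ), ∃ δ2 > (0:ℝ), ∃ θ2 > (0:ℝ), ∃ δ > (0:ℝ),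
      ∀ (l : ℝ → ℝ) (f : ℝ → ℝ → ℝ) (N Fi ΔP : ℝ → ℝ),
        -- regularity: l is C¹ and f is C²
        ContDiff ℝ 1 l →
        ContDiff ℝ 2 (Function.uncurry f) →
        -- state constraints
        (∀ t, 0 ≤ t → l t ∈ Set.Ioo 0 L) →
        (∀ t, 0 ≤ t → ∀ x ∈ Set.Icc (0:ℝ) 1, f t x < 1) →
        -- die pressure difference and feedback controls
        (∀ t, 0 ≤ t → ΔP t = N t * qfun η ρ0 Veff L B Kd (l t)) →
        (∀ t, 0 ≤ t → N t = Ne + k1 * (ΔP t - Ne * qfun η ρ0 Veff L B Kd le)) →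
        (∀ t, 0 ≤ t → 0 < N t) →
        (∀ t, 0 ≤ t →
          Fi t = ρ0 * Veff * Ne * fpe + k2 * (ΔP t - Ne * qfun η ρ0 Veff L B Kd le)) →
        -- interface dynamics
        (∀ t, 0 ≤ t → HasDerivAt l
          (((Kd / η) * ΔP t - ρ0 * Veff * N t * f t 1) / (ρ0 * Seff * (1 - f t 1))) t) →
        -- transport equation with normalized speed α(t,x) = (ζ·N(t) − x·l'(t))/l(t)
        (∀ t, 0 ≤ t → ∀ x ∈ Set.Icc (0:ℝ) 1,
          deriv (fun s => f s x) t
            + ((ζ * N t - x * deriv l t) / l t) * deriv (f t) x = 0) →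
        -- boundary condition
        (∀ t, 0 ≤ t → f t 0 = Fi t / (ρ0 * Veff * N t)) →
        ∀ t, 0 ≤ t →
          |l t - le| + |N t - Ne| + |f t 1 - fpe| ≤ δ →
          ∃ v : ℝ,
            HasDerivAt
              (fun s => ∫ x in (0:ℝ)..1, Real.exp (-γ2 * x) * (deriv (f s) x) ^ 2) v t ∧
            v ≤ -β2 * (∫ x in (0:ℝ)..1, Real.exp (-γ2 * x) * (deriv (f t) x) ^ 2)
              - δ2 * (deriv (f t) 1) ^ 2
              + θ2 * ((l t - le) ^ 2 + (f t 1 - fpe) ^ 2) := by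
  have hq : ContDiffAt ℝ 1 (qfun η ρ0 Veff L B Kd) le :=
    contDiffAt_qfun (add_pos (mul_pos hB hρ0) (mul_pos hKd (sub_pos.2 hle.2))).ne'
  obtain ⟨ε, hε, M, hM, K, hK, hinlet, hvel⟩ := exists_closedLoop_local_bounds (k2 := k2)
    hq hden hρ0.ne' hSeff.ne' hVeff.ne' hNe.ne' hfpe.2.ne heq
  have hL : 0 < L := hle.1.trans hle.2
  set P := ζ * Ne / 2 with hPdef
  have hP : 0 < P := by positivity
  set δ := min (ε / 2) (min (Ne / 2) (P / (4 * K))) with hδdef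
  have hδε : δ < ε := (min_le_left _ _).trans_lt (half_lt_self hε)
  have hδNe : δ ≤ Ne / 2 := by simp [hδdef]
  have hδK : δ * (4 * K) ≤ P := (le_div_iff₀ (by positivity)).1 <| by simp [hδdef]
  refine ⟨1, one_pos, P / (2 * L), by positivity, P / (2 * L) * Real.exp (-1), by positivity,
    L / P * (M * K) ^ 2, by positivity, δ, by positivity, ?_⟩
  intro l f N Fi ΔP hl hf hlL _ hΔP hN _ hFi hl' hPDE hbc t ht hclose
  obtain ⟨hΔl, hΔN, hΔf⟩ : |l t - le| ≤ δ ∧ |N t - Ne| ≤ δ ∧ |f t 1 - fpe| ≤ δ := by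
    refine ⟨?_, ?_, ?_⟩ <;>
      linarith [abs_nonneg (l t - le), abs_nonneg (N t - Ne), abs_nonneg (f t 1 - fpe)]
  have hNt : P ≤ ζ * N t := by
    nlinarith [(abs_le.1 hΔN).1]
  have hdist : dist (l t, f t 1) (le, fpe) ≤ δ := by
    rw [Prod.dist_eq, Real.dist_eq, Real.dist_eq]; exact max_le hΔl hΔf
  obtain ⟨hb, hφ⟩ := closedLoop_deriv_eq hl.continuous (hf.differentiable two_ne_zero) hΔP hN hFi
    hl' hbc (fun x hx => ⟨(hinlet x hx).1, (hinlet x hx).2.1⟩) ht (hΔl.trans_lt hδε)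
  have hbK : |deriv l t| ≤ K * dist (l t, f t 1) (le, fpe) := hb ▸ hvel _ (hdist.trans_lt hδε)
  have hbP : |deriv l t| ≤ P / 4 := by nlinarith [mul_le_mul_of_nonneg_left hdist hK.le]
  obtain ⟨v, hv, hvle⟩ := transport_energy_estimate hf hP (hlL t ht).1 (hlL t ht).2.le
    hNt hbP (hPDE t ht)
  have hinflow := mul_le_mul_of_nonneg_left
    (hφ ▸ sq_mul_le_of_abs_le ((hinlet _ (hΔl.trans_lt hδε)).2.2) hbK) (by positivity : 0 ≤ L / P)
  exact ⟨v, hv, by linarith⟩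

/-- Lemma 2 of the paper: if `1 − k1·b2 ≠ 0` with `b2 = q(le)`, there are
positive constants `γ2, β2, δ2, θ2, δ` such that along every classical solution of the
closed-loop extrusion model with `f` of class `C²`, at each time `t ≥ 0` where the solution
is `δ`-close to the equilibrium, `V2(t) = ∫₀¹ e^{−γ2 x}(∂ₓf(t,x))² dx` is differentiable
with `V2'(t) ≤ −β2·V2(t) − δ2·(∂ₓf(t,1))² + θ2·((l(t) − le)² + (f(t,1) − fpe)²)`. -/
theorem lyapunov_V2_decay
    (L B Kd ζ η ρ0 Seff Veff : ℝ)
    (hL : 0 < L) (hB : 0 < B) (hKd : 0 < Kd) (hζ : 0 < ζ) (hη : 0 < η)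
    (hρ0 : 0 < ρ0) (hSeff : 0 < Seff) (hVeff : 0 < Veff)
    (le fpe Ne : ℝ)
    (hle : le ∈ Set.Ioo 0 L) (hfpe : fpe ∈ Set.Ioo (0:ℝ) 1) (hNe : 0 < Ne)
    (heq : (Kd / η) * Ne * qfun η ρ0 Veff L B Kd le = ρ0 * Veff * Ne * fpe)
    (k1 k2 : ℝ)
    (hden : 1 - k1 * qfun η ρ0 Veff L B Kd le ≠ 0) :
    ∃ γ2 > (0:ℝ), ∃ β2 > (0:ℝ), ∃ δ2 > (0:ℝ), ∃ θ2 > (0:ℝ), ∃ δ > (0:ℝ),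
      ∀ (l : ℝ → ℝ) (f : ℝ → ℝ → ℝ) (N Fi ΔP : ℝ → ℝ),
        -- regularity: l is C¹ and f is C²
        ContDiff ℝ 1 l →
        ContDiff ℝ 2 (Function.uncurry f) →
        -- state constraints
        (∀ t, 0 ≤ t → l t ∈ Set.Ioo 0 L) →
        (∀ t, 0 ≤ t → ∀ x ∈ Set.Icc (0:ℝ) 1, f t x < 1) →
        -- die pressure difference and feedback controls
        (∀ t, 0 ≤ t → ΔP t = N t * qfun η ρ0 Veff L B Kd (l t)) →
        (∀ t, 0 ≤ t → N t = Ne + k1 * (ΔP t - Ne * qfun η ρ0 Veff L B Kd le)) →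
        (∀ t, 0 ≤ t → 0 < N t) →
        (∀ t, 0 ≤ t →
          Fi t = ρ0 * Veff * Ne * fpe + k2 * (ΔP t - Ne * qfun η ρ0 Veff L B Kd le)) →
        -- interface dynamics
        (∀ t, 0 ≤ t → HasDerivAt l
          (((Kd / η) * ΔP t - ρ0 * Veff * N t * f t 1) / (ρ0 * Seff * (1 - f t 1))) t) →
        -- transport equation with normalized speed α(t,x) = (ζ·N(t) − x·l'(t))/l(t)
        (∀ t, 0 ≤ t → ∀ x ∈ Set.Icc (0:ℝ) 1,
          deriv (fun s => f s x) t
            + ((ζ * N t - x * deriv l t) / l t) * deriv (f t) x = 0) →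
        -- boundary condition
        (∀ t, 0 ≤ t → f t 0 = Fi t / (ρ0 * Veff * N t)) →
        ∀ t, 0 ≤ t →
          |l t - le| + |N t - Ne| + |f t 1 - fpe| ≤ δ →
          ∃ v : ℝ,
            HasDerivAt
              (fun s => ∫ x in (0:ℝ)..1, Real.exp (-γ2 * x) * (deriv (f s) x) ^ 2) v t ∧
            v ≤ -β2 * (∫ x in (0:ℝ)..1, Real.exp (-γ2 * x) * (deriv (f t) x) ^ 2)
              - δ2 * (deriv (f t) 1) ^ 2
              + θ2 * ((l t - le) ^ 2 + (f t 1 - fpe) ^ 2) :=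
  lyapunov_V2_decay_general L B Kd ζ η ρ0 Seff Veff hB hKd hζ hρ0 hSeff hVeff le fpe Ne hle hfpe hNe
    heq k1 k2 hden
end

section
/- Let T > 0, γ > 0, let α : [0,T]×[0,1] → ℝ be continuously differentiable, and let f : [0,T]×[0,1] → ℝ be continuously differentiable and satisfy the transport equation ∂ₜf(t,x) + α(t,x)·∂ₓf(t,x) = 0 on [0,T]×[0,1]. Then the weighted energy V(t) := ∫₀¹ e^{−γ·x}·f(t,x)² dx is differentiable on (0,T) and V'(t) = −α(t,1)·e^{−γ}·f(t,1)² + α(t,0)·f(t,0)² + ∫₀¹ (∂ₓα(t,x) − γ·α(t,x))·e^{−γ·x}·f(t,x)² dx. -/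
/-!
The integrand `e^{-γx} f(s,x)²` is `C¹` jointly in `(s,x)`, so its time derivative is bounded on
compact sets and one may differentiate under the integral sign. The transport equation turns
`∂ₜ(f²)` into `-α ∂ₓ(f²)`, and one integration by parts against the weight `α e^{-γx}` produces
the two boundary terms and the interior term `(∂ₓα - γα) e^{-γx} f²`.
-/

open Function MeasureTheory Real

section Leibniz

variable {E : Type*} [NormedAddCommGroup E] [NormedSpace ℝ E]

theorem DifferentiableAt.hasDerivAt_uncurry_left {F : ℝ → ℝ → E} {s x : ℝ}
    (hF : DifferentiableAt ℝ (uncurry F) (s, x)) :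
    HasDerivAt (fun s => F s x) (fderiv ℝ (uncurry F) (s, x) (1, 0)) s :=
  (hF.hasFDerivAt.comp_hasDerivAt s ((hasDerivAt_id s).prodMk (hasDerivAt_const s x)) :)

theorem hasDerivAt_intervalIntegral_of_contDiff {F : ℝ → ℝ → E}
    (hF : ContDiff ℝ 1 (uncurry F)) (a b t : ℝ) :
    HasDerivAt (fun s => ∫ x in a..b, F s x) (∫ x in a..b, deriv (fun s => F s x) t) t := by
  set F' : ℝ → ℝ → E := fun s x => fderiv ℝ (uncurry F) (s, x) (1, 0)
  have hF'_cont : Continuous (uncurry F') :=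
    (hF.continuous_fderiv one_ne_zero).clm_apply continuous_const
  have hF_deriv : ∀ s x, HasDerivAt (fun s => F s x) (F' s x) s := fun s x =>
    (hF.differentiable one_ne_zero (s, x)).hasDerivAt_uncurry_left
  obtain ⟨C, hC⟩ := ((isCompact_closedBall t 1).prod isCompact_uIcc).exists_bound_of_continuousOn
    hF'_cont.continuousOn
  have hslice : ∀ s, Continuous (F s) := fun s => hF.continuous.comp (.prodMk_right s)
  have hV := intervalIntegral.hasDerivAt_integral_of_dominated_loc_of_deriv_le
    (μ := volume) (a := a) (b := b) (F' := F') (bound := fun _ => C)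
    (Metric.closedBall_mem_nhds t one_pos)
    (.of_forall fun s => (hslice s).aestronglyMeasurable) ((hslice t).intervalIntegrable a b)
    (hF'_cont.comp (.prodMk_right t)).aestronglyMeasurable
    (.of_forall fun x hx s hs => hC (s, x) ⟨hs, Set.uIoc_subset_uIcc hx⟩)
    intervalIntegrable_const (.of_forall fun x _ s _ => hF_deriv s x)
  simpa only [(hF_deriv t _).deriv] using hV.2

end Leibniz

theorem integral_mul_exp_mul_deriv_sq {a g : ℝ → ℝ} (ha : ContDiff ℝ 1 a) (hg : ContDiff ℝ 1 g)
    (γ x₀ x₁ : ℝ) :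
    ∫ x in x₀..x₁, a x * exp (-γ * x) * (2 * g x * deriv g x) =
      a x₁ * exp (-γ * x₁) * g x₁ ^ 2 - a x₀ * exp (-γ * x₀) * g x₀ ^ 2
        - ∫ x in x₀..x₁, (deriv a x - γ * a x) * exp (-γ * x) * g x ^ 2 := by
  have hweight : ∀ x, HasDerivAt (fun y => a y * exp (-γ * y))
      ((deriv a x - γ * a x) * exp (-γ * x)) x := fun x =>
    ((ha.differentiable one_ne_zero x).hasDerivAt.mul
      (((hasDerivAt_id' x).const_mul (-γ)).exp)).congr_deriv (by ring)
  have hsq : ∀ x, HasDerivAt (fun y => g y ^ 2) (2 * g x * deriv g x) x := fun x =>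
    ((hg.differentiable one_ne_zero x).hasDerivAt.pow 2).congr_deriv (by ring)
  have hcont_deriv : ∀ {h : ℝ → ℝ}, ContDiff ℝ 1 h → Continuous (deriv h) := fun hh =>
    hh.continuous_deriv le_rfl
  rw [intervalIntegral.integral_mul_deriv_eq_deriv_mul (fun x _ => hweight x) (fun x _ => hsq x)
    ((((hcont_deriv ha).sub (continuous_const.mul ha.continuous)).mul
      (by fun_prop)).intervalIntegrable _ _)
    (((continuous_const.mul hg.continuous).mul (hcont_deriv hg)).intervalIntegrable _ _)]

theorem weighted_energy_deriv_transport_general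
    (T γ : ℝ)
    (α f : ℝ → ℝ → ℝ)
    (hα : ContDiff ℝ 1 (Function.uncurry α))
    (hf : ContDiff ℝ 1 (Function.uncurry f))
    (hpde : ∀ t ∈ Set.Icc (0:ℝ) T, ∀ x ∈ Set.Icc (0:ℝ) 1,
      deriv (fun s => f s x) t + α t x * deriv (f t) x = 0) :
    ∀ t ∈ Set.Ioo (0:ℝ) T,
      HasDerivAt (fun s => ∫ x in (0:ℝ)..1, Real.exp (-γ * x) * (f s x) ^ 2)
        (-(α t 1) * Real.exp (-γ) * (f t 1) ^ 2 + α t 0 * (f t 0) ^ 2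
          + ∫ x in (0:ℝ)..1, (deriv (α t) x - γ * α t x) * Real.exp (-γ * x) * (f t x) ^ 2)
        t := by
  intro t ht
  have hslice : ∀ {u : ℝ → ℝ → ℝ}, ContDiff ℝ 1 (uncurry u) → ContDiff ℝ 1 (u t) := fun hu =>
    hu.comp (contDiff_const.prodMk contDiff_id)
  have henergy : ContDiff ℝ 1 (uncurry fun s x => exp (-γ * x) * f s x ^ 2) :=
    (contDiff_exp.comp (contDiff_const.mul contDiff_snd)).mul (hf.pow 2)
  have htransport : ∀ x ∈ Set.uIcc (0:ℝ) 1, deriv (fun s => exp (-γ * x) * f s x ^ 2) t =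
      -(α t x * exp (-γ * x) * (2 * f t x * deriv (f t) x)) := fun x hx => by
    have hft : DifferentiableAt ℝ (fun s => f s x) t :=
      (hf.comp (contDiff_id.prodMk contDiff_const)).differentiable one_ne_zero t
    have hpde_tx := hpde t (Set.Ioo_subset_Icc_self ht) x (by simpa using hx)
    have hchain : deriv (fun s => exp (-γ * x) * f s x ^ 2) t =
        exp (-γ * x) * (2 * f t x * deriv (fun s => f s x) t) := by
      simp [hft]
    rw [hchain, eq_neg_of_add_eq_zero_left hpde_tx]
    ring
  refine (hasDerivAt_intervalIntegral_of_contDiff henergy 0 1 t).congr_deriv ?_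
  rw [intervalIntegral.integral_congr htransport, intervalIntegral.integral_neg,
    integral_mul_exp_mul_deriv_sq (hslice hα) (hslice hf)]
  simp only [mul_zero, mul_one, exp_zero]
  ring

/-- derivative of the weighted energy `V(t) = ∫₀¹ e^{−γx} f(t,x)² dx`
along a solution of the transport equation `∂ₜf + α·∂ₓf = 0` on `[0,T]×[0,1]`. -/
theorem weighted_energy_deriv_transport
    (T γ : ℝ) (hT : 0 < T) (hγ : 0 < γ)
    (α f : ℝ → ℝ → ℝ)
    (hα : ContDiff ℝ 1 (Function.uncurry α))
    (hf : ContDiff ℝ 1 (Function.uncurry f))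
    (hpde : ∀ t ∈ Set.Icc (0:ℝ) T, ∀ x ∈ Set.Icc (0:ℝ) 1,
      deriv (fun s => f s x) t + α t x * deriv (f t) x = 0) :
    ∀ t ∈ Set.Ioo (0:ℝ) T,
      HasDerivAt (fun s => ∫ x in (0:ℝ)..1, Real.exp (-γ * x) * (f s x) ^ 2)
        (-(α t 1) * Real.exp (-γ) * (f t 1) ^ 2 + α t 0 * (f t 0) ^ 2
          + ∫ x in (0:ℝ)..1, (deriv (α t) x - γ * α t x) * Real.exp (-γ * x) * (f t x) ^ 2)
        t :=
  weighted_energy_deriv_transport_general T γ α f hα hf hpde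
end

section
/- Let L, B, Kd, η, ρ0, Veff be positive reals, le ∈ (0, L), Ne > 0, fpe ∈ ℝ, k1, k2 ∈ ℝ, and define q(l) := η·ρ0·Veff·(L − l)/(B·ρ0 + Kd·(L − l)), b1 := Ne·q'(le), b2 := q(le), ΔPe := Ne·q(le), Fine := ρ0·Veff·Ne·fpe, and D(l) := (Ne − k1·ΔPe)·q(l)/(1 − k1·q(l)). Assume 1 − k1·b2 ≠ 0. Then the closed-loop inlet filling-ratio map G(l) := (Fine + k2·(D(l) − ΔPe))/(ρ0·Veff·(Ne + k1·(D(l) − ΔPe))) satisfies G(le) = fpe and is differentiable at le with derivative G'(le) = b1·(k2 − fpe·ρ0·Veff·k1)/(ρ0·Veff·Ne·(1 − k1·b2)). -/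
/-- Closed-loop die pressure difference `D(l) = (Ne − k1·ΔPe)·q(l)/(1 − k1·q(l))`. -/
noncomputable def Dfun (η ρ0 Veff L B Kd Ne ΔPe k1 : ℝ) (l : ℝ) : ℝ :=
  (Ne - k1 * ΔPe) * qfun η ρ0 Veff L B Kd l / (1 - k1 * qfun η ρ0 Veff L B Kd l)

/-- Closed-loop inlet filling-ratio map
`G(l) = (Fine + k2·(D(l) − ΔPe))/(ρ0·Veff·(Ne + k1·(D(l) − ΔPe)))`. -/
noncomputable def Gfun (η ρ0 Veff L B Kd Ne ΔPe Fine k1 k2 : ℝ) (l : ℝ) : ℝ :=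
  (Fine + k2 * (Dfun η ρ0 Veff L B Kd Ne ΔPe k1 l - ΔPe)) /
    (ρ0 * Veff * (Ne + k1 * (Dfun η ρ0 Veff L B Kd Ne ΔPe k1 l - ΔPe)))


/-!
`G = R ∘ D` and `D = M ∘ q`, where `M x = (Ne − k1·Ne·q(le))·x/(1 − k1·x)` is the closed-loop
pressure map and `R y = (Fine + k2·(y − ΔPe))/(ρ0·Veff·(Ne + k1·(y − ΔPe)))` is a linear
fractional map. Since `ΔPe = Ne·q(le)` and `Fine = ρ0·Veff·Ne·fpe`, `M` sends `q(le)` to `ΔPe` and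
`R` sends `ΔPe` to `fpe`, so the chain rule gives `G'(le) = R'(ΔPe)·M'(q le)·q'(le)` with
`M'(q le) = Ne/(1 − k1·q(le))` and `R'(ΔPe) = (k2 − fpe·ρ0·Veff·k1)/(ρ0·Veff·Ne)`.
-/

theorem differentiableAt_qfun {η ρ0 Veff L B Kd l : ℝ} (h : B * ρ0 + Kd * (L - l) ≠ 0) :
    DifferentiableAt ℝ (qfun η ρ0 Veff L B Kd) l :=
  DifferentiableAt.div (by fun_prop) (by fun_prop) h

section FeedbackMap

variable {N k x₀ : ℝ}

theorem feedback_map_apply_self (h : 1 - k * x₀ ≠ 0) :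
    (N - k * (N * x₀)) * x₀ / (1 - k * x₀) = N * x₀ := by
  field_simp

theorem hasDerivAt_feedback_map (h : 1 - k * x₀ ≠ 0) :
    HasDerivAt (fun x => (N - k * (N * x₀)) * x / (1 - k * x)) (N / (1 - k * x₀)) x₀ := by
  have hM := ((hasDerivAt_id' x₀).const_mul (N - k * (N * x₀))).div
    (((hasDerivAt_id' x₀).const_mul k).const_sub 1) h
  refine hM.congr_deriv ?_
  field_simp
  ring

end FeedbackMap

section LinearFractional

variable {m c p b d y₀ : ℝ}

theorem linearFractional_apply_self (hm : m ≠ 0) (hc : c ≠ 0) :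
    (m * c * p + b * (y₀ - y₀)) / (m * (c + d * (y₀ - y₀))) = p := by
  simp only [sub_self, mul_zero, add_zero]
  field_simp

theorem hasDerivAt_linearFractional (hm : m ≠ 0) (hc : c ≠ 0) :
    HasDerivAt (fun y => (m * c * p + b * (y - y₀)) / (m * (c + d * (y - y₀))))
      ((b - p * m * d) / (m * c)) y₀ := by
  have hshift : HasDerivAt (fun y => y - y₀) 1 y₀ := (hasDerivAt_id y₀).sub_const y₀
  have hR := ((hshift.const_mul b).const_add (m * c * p)).div
    ((hshift.const_mul d).const_add c |>.const_mul m) (by simpa using mul_ne_zero hm hc)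
  refine hR.congr_deriv ?_
  simp only [sub_self, mul_zero, add_zero]
  field_simp

end LinearFractional

theorem closed_loop_inlet_filling_ratio_deriv_general
    (L B Kd η ρ0 Veff : ℝ)
    (hB : 0 < B) (hKd : 0 < Kd) (hρ0 : 0 < ρ0) (hVeff : 0 < Veff)
    (le Ne fpe k1 k2 : ℝ) (hle : le ∈ Set.Ioo 0 L) (hNe : 0 < Ne)
    (b1 b2 ΔPe Fine : ℝ)
    (hb1 : b1 = Ne * deriv (qfun η ρ0 Veff L B Kd) le)
    (hb2 : b2 = qfun η ρ0 Veff L B Kd le)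
    (hΔPe : ΔPe = Ne * qfun η ρ0 Veff L B Kd le)
    (hFine : Fine = ρ0 * Veff * Ne * fpe)
    (hden : 1 - k1 * b2 ≠ 0) :
    Gfun η ρ0 Veff L B Kd Ne ΔPe Fine k1 k2 le = fpe ∧
    HasDerivAt (Gfun η ρ0 Veff L B Kd Ne ΔPe Fine k1 k2)
      (b1 * (k2 - fpe * ρ0 * Veff * k1) / (ρ0 * Veff * Ne * (1 - k1 * b2))) le := by
  subst hb1 hb2 hΔPe hFine
  set q := qfun η ρ0 Veff L B Kd
  have hqden : B * ρ0 + Kd * (L - le) ≠ 0 := by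
    have : 0 < L - le := sub_pos.2 hle.2
    positivity
  have hm : ρ0 * Veff ≠ 0 := by positivity
  have hD_le : Dfun η ρ0 Veff L B Kd Ne (Ne * q le) k1 le = Ne * q le :=
    feedback_map_apply_self hden
  have hD : HasDerivAt (Dfun η ρ0 Veff L B Kd Ne (Ne * q le) k1)
      (Ne / (1 - k1 * q le) * deriv q le) le :=
    (hasDerivAt_feedback_map hden).comp le (differentiableAt_qfun hqden).hasDerivAt
  refine ⟨?_, ?_⟩
  · rw [Gfun, hD_le]
    exact linearFractional_apply_self hm hNe.ne'
  · refine ((hasDerivAt_linearFractional hm hNe.ne').comp_of_eq le hD hD_le.symm).congr_deriv ?_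
    field_simp

/-- the closed-loop inlet filling-ratio map `G` sends the equilibrium
interface position to the equilibrium filling ratio and has derivative
`b1·(k2 − fpe·ρ0·Veff·k1)/(ρ0·Veff·Ne·(1 − k1·b2))` at `le`. -/
theorem closed_loop_inlet_filling_ratio_deriv
    (L B Kd η ρ0 Veff : ℝ)
    (hL : 0 < L) (hB : 0 < B) (hKd : 0 < Kd) (hη : 0 < η) (hρ0 : 0 < ρ0) (hVeff : 0 < Veff)
    (le Ne fpe k1 k2 : ℝ) (hle : le ∈ Set.Ioo 0 L) (hNe : 0 < Ne)
    (b1 b2 ΔPe Fine : ℝ)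
    (hb1 : b1 = Ne * deriv (qfun η ρ0 Veff L B Kd) le)
    (hb2 : b2 = qfun η ρ0 Veff L B Kd le)
    (hΔPe : ΔPe = Ne * qfun η ρ0 Veff L B Kd le)
    (hFine : Fine = ρ0 * Veff * Ne * fpe)
    (hden : 1 - k1 * b2 ≠ 0) :
    Gfun η ρ0 Veff L B Kd Ne ΔPe Fine k1 k2 le = fpe ∧
    HasDerivAt (Gfun η ρ0 Veff L B Kd Ne ΔPe Fine k1 k2)
      (b1 * (k2 - fpe * ρ0 * Veff * k1) / (ρ0 * Veff * Ne * (1 - k1 * b2))) le :=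
  closed_loop_inlet_filling_ratio_deriv_general L B Kd η ρ0 Veff hB hKd hρ0 hVeff le Ne fpe k1 k2
    hle hNe b1 b2 ΔPe Fine hb1 hb2 hΔPe hFine hden
end

section
/- Let L, B, Kd, ζ, η, ρ0, Seff, Veff be positive reals, le ∈ (0, L), fpe ∈ (0, 1), Ne > 0, define q(l) := η·ρ0·Veff·(L − l)/(B·ρ0 + Kd·(L − l)) and F(l, N, fp) := ((Kd/η)·N·q(l) − ρ0·Veff·N·fp)/(ρ0·Seff·(1 − fp)), and assume the equilibrium relation (Kd/η)·Ne·q(le) = ρ0·Veff·Ne·fpe. Then F is differentiable at (le, Ne, fpe) with partial derivatives a1 := ∂F/∂l = −Kd·ρ0·Veff·B·Ne/(Seff·(1 − fpe)·(B·ρ0 + Kd·(L − le))²), a2 := ∂F/∂N = 0, and a3 := ∂F/∂fp = −Veff·Ne/(Seff·(1 − fpe)); in particular a1 < 0 and a3 < 0. -/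
/-- Interface velocity
`F(l, N, fp) = ((Kd/η)·N·q(l) − ρ0·Veff·N·fp)/(ρ0·Seff·(1 − fp))` of the isothermal
extrusion model. -/
noncomputable def Ffun (η ρ0 Veff Seff L B Kd : ℝ) (l N fp : ℝ) : ℝ :=
  ((Kd / η) * N * qfun η ρ0 Veff L B Kd l - ρ0 * Veff * N * fp) / (ρ0 * Seff * (1 - fp))

theorem hasDerivAt_sub_mul_div_mul_one_sub (a b c : ℝ) {s : ℝ} (hb : b ≠ 0) (hs : s ≠ 1) :
    HasDerivAt (fun t => (c - a * t) / (b * (1 - t))) ((c - a) / (b * (1 - s) ^ 2)) s := by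
  have hnum : HasDerivAt (fun t => c - a * t) (-a) s := by
    simpa using ((hasDerivAt_id s).const_mul a).const_sub c
  have hden : HasDerivAt (fun t => b * (1 - t)) (-b) s := by
    simpa using ((hasDerivAt_id s).const_sub 1).const_mul b
  refine (hnum.div hden (mul_ne_zero hb (sub_ne_zero.2 hs.symm))).congr_deriv ?_
  field_simp
  ring

section

variable {η ρ0 Veff Seff L B Kd : ℝ}

theorem hasDerivAt_qfun {l : ℝ} (hD : B * ρ0 + Kd * (L - l) ≠ 0) :
    HasDerivAt (qfun η ρ0 Veff L B Kd)
      (-(η * ρ0 ^ 2 * Veff * B) / (B * ρ0 + Kd * (L - l)) ^ 2) l := by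
  have hlen : HasDerivAt (fun s => L - s) (-1) l := by
    simpa using (hasDerivAt_id l).const_sub L
  refine ((hlen.const_mul (η * ρ0 * Veff)).div
    ((hlen.const_mul Kd).const_add (B * ρ0)) hD).congr_deriv ?_
  ring

namespace Ffun

theorem hasDerivAt_l {l N fp : ℝ} (hη : η ≠ 0) (hρ0 : ρ0 ≠ 0)
    (hD : B * ρ0 + Kd * (L - l) ≠ 0) :
    HasDerivAt (fun s => Ffun η ρ0 Veff Seff L B Kd s N fp)
      (-(Kd * ρ0 * Veff * B * N) / (Seff * (1 - fp) * (B * ρ0 + Kd * (L - l)) ^ 2)) l := by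
  refine ((((hasDerivAt_qfun hD).const_mul (Kd / η * N)).sub_const
    (ρ0 * Veff * N * fp)).div_const (ρ0 * Seff * (1 - fp))).congr_deriv ?_
  field_simp

theorem eq_mul_one (l N fp : ℝ) :
    Ffun η ρ0 Veff Seff L B Kd l N fp = N * Ffun η ρ0 Veff Seff L B Kd l 1 fp := by
  simp only [Ffun]
  ring

theorem hasDerivAt_N (l N fp : ℝ) :
    HasDerivAt (fun s => Ffun η ρ0 Veff Seff L B Kd l s fp)
      (Ffun η ρ0 Veff Seff L B Kd l 1 fp) N := by
  rw [funext fun s => eq_mul_one l s fp]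
  simpa using (hasDerivAt_id N).mul_const (Ffun η ρ0 Veff Seff L B Kd l 1 fp)

theorem hasDerivAt_fp {l N fp : ℝ} (hρ0 : ρ0 ≠ 0) (hSeff : Seff ≠ 0) (hfp : fp ≠ 1) :
    HasDerivAt (fun s => Ffun η ρ0 Veff Seff L B Kd l N s)
      ((Kd / η * N * qfun η ρ0 Veff L B Kd l - ρ0 * Veff * N) / (ρ0 * Seff * (1 - fp) ^ 2))
      fp :=
  hasDerivAt_sub_mul_div_mul_one_sub (ρ0 * Veff * N) (ρ0 * Seff)
    (Kd / η * N * qfun η ρ0 Veff L B Kd l) (mul_ne_zero hρ0 hSeff) hfp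

theorem differentiableAt {l N fp : ℝ} (hD : B * ρ0 + Kd * (L - l) ≠ 0)
    (hden : ρ0 * Seff * (1 - fp) ≠ 0) :
    DifferentiableAt ℝ
      (fun p : ℝ × ℝ × ℝ => Ffun η ρ0 Veff Seff L B Kd p.1 p.2.1 p.2.2) (l, N, fp) := by
  unfold Ffun qfun
  fun_prop (disch := assumption)

theorem eval_one_eq_zero_of_equilibrium {l N fp : ℝ} (hN : N ≠ 0)
    (heq : Kd / η * N * qfun η ρ0 Veff L B Kd l = ρ0 * Veff * N * fp) :
    Ffun η ρ0 Veff Seff L B Kd l 1 fp = 0 := by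
  have heq₁ : Kd / η * qfun η ρ0 Veff L B Kd l = ρ0 * Veff * fp :=
    mul_left_cancel₀ hN (by linear_combination heq)
  simp only [Ffun, mul_one, heq₁, sub_self, zero_div]

end Ffun

end

theorem interface_velocity_partial_derivs_general
    (L B Kd η ρ0 Seff Veff : ℝ)
    (hB : 0 < B) (hKd : 0 < Kd) (hη : 0 < η)
    (hρ0 : 0 < ρ0) (hSeff : 0 < Seff) (hVeff : 0 < Veff)
    (le fpe Ne : ℝ) (hle : le ∈ Set.Ioo 0 L) (hfpe : fpe ∈ Set.Ioo (0:ℝ) 1) (hNe : 0 < Ne)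
    (heq : (Kd / η) * Ne * qfun η ρ0 Veff L B Kd le = ρ0 * Veff * Ne * fpe) :
    DifferentiableAt ℝ
      (fun p : ℝ × ℝ × ℝ => Ffun η ρ0 Veff Seff L B Kd p.1 p.2.1 p.2.2) (le, Ne, fpe) ∧
    HasDerivAt (fun s => Ffun η ρ0 Veff Seff L B Kd s Ne fpe)
      (-(Kd * ρ0 * Veff * B * Ne) / (Seff * (1 - fpe) * (B * ρ0 + Kd * (L - le)) ^ 2)) le ∧
    HasDerivAt (fun s => Ffun η ρ0 Veff Seff L B Kd le s fpe) 0 Ne ∧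
    HasDerivAt (fun s => Ffun η ρ0 Veff Seff L B Kd le Ne s)
      (-(Veff * Ne) / (Seff * (1 - fpe))) fpe ∧
    -(Kd * ρ0 * Veff * B * Ne) / (Seff * (1 - fpe) * (B * ρ0 + Kd * (L - le)) ^ 2) < 0 ∧
    -(Veff * Ne) / (Seff * (1 - fpe)) < 0 := by
  have hD : 0 < B * ρ0 + Kd * (L - le) := by
    have := sub_pos.2 hle.2
    positivity
  have hfpe₁ : 0 < 1 - fpe := sub_pos.2 hfpe.2
  have hF₁ : Ffun η ρ0 Veff Seff L B Kd le 1 fpe = 0 :=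
    Ffun.eval_one_eq_zero_of_equilibrium hNe.ne' heq
  refine ⟨Ffun.differentiableAt hD.ne' (by positivity),
    Ffun.hasDerivAt_l hη.ne' hρ0.ne' hD.ne', hF₁ ▸ Ffun.hasDerivAt_N le Ne fpe, ?_, ?_, ?_⟩
  · refine (Ffun.hasDerivAt_fp hρ0.ne' hSeff.ne' hfpe.2.ne).congr_deriv ?_
    rw [heq]
    field_simp
    ring
  · exact div_neg_of_neg_of_pos (neg_neg_of_pos (by positivity)) (by positivity)
  · exact div_neg_of_neg_of_pos (neg_neg_of_pos (by positivity)) (by positivity)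

/-- at an equilibrium `(le, Ne, fpe)` the interface velocity `F` is
differentiable, with partial derivatives
`a1 = −Kd·ρ0·Veff·B·Ne/(Seff·(1 − fpe)·(B·ρ0 + Kd·(L − le))²)`, `a2 = 0`,
`a3 = −Veff·Ne/(Seff·(1 − fpe))`; in particular `a1 < 0` and `a3 < 0`. -/
theorem interface_velocity_partial_derivs
    (L B Kd ζ η ρ0 Seff Veff : ℝ)
    (hL : 0 < L) (hB : 0 < B) (hKd : 0 < Kd) (hζ : 0 < ζ) (hη : 0 < η)
    (hρ0 : 0 < ρ0) (hSeff : 0 < Seff) (hVeff : 0 < Veff)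
    (le fpe Ne : ℝ) (hle : le ∈ Set.Ioo 0 L) (hfpe : fpe ∈ Set.Ioo (0:ℝ) 1) (hNe : 0 < Ne)
    (heq : (Kd / η) * Ne * qfun η ρ0 Veff L B Kd le = ρ0 * Veff * Ne * fpe) :
    DifferentiableAt ℝ
      (fun p : ℝ × ℝ × ℝ => Ffun η ρ0 Veff Seff L B Kd p.1 p.2.1 p.2.2) (le, Ne, fpe) ∧
    HasDerivAt (fun s => Ffun η ρ0 Veff Seff L B Kd s Ne fpe)
      (-(Kd * ρ0 * Veff * B * Ne) / (Seff * (1 - fpe) * (B * ρ0 + Kd * (L - le)) ^ 2)) le ∧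
    HasDerivAt (fun s => Ffun η ρ0 Veff Seff L B Kd le s fpe) 0 Ne ∧
    HasDerivAt (fun s => Ffun η ρ0 Veff Seff L B Kd le Ne s)
      (-(Veff * Ne) / (Seff * (1 - fpe))) fpe ∧
    -(Kd * ρ0 * Veff * B * Ne) / (Seff * (1 - fpe) * (B * ρ0 + Kd * (L - le)) ^ 2) < 0 ∧
    -(Veff * Ne) / (Seff * (1 - fpe)) < 0 :=
  interface_velocity_partial_derivs_general L B Kd η ρ0 Seff Veff hB hKd hη hρ0 hSeff hVeff le fpe
    Ne hle hfpe hNe heq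
end
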